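/- arXiv:0804.2219 — 3 statements merged into one kernel-verified Lean document; each statement's English description precedes it below -/
import Mathlib

section
/- Let R be a commutative ring and a_1, …, a_{n−1}, a_n ∈ R. Then a_1, …, a_{n−1}, a_n − X is a regular sequence on the polynomial ring R[X] if and only if a_1, …, a_{n−1} is a regular sequence on R. -/
/-!
Induct on the length of the sequence. Reducing modulo a first element `r` commutes with
adjoining `X`, since `R[X] ⧸ (C r) ≅ (R ⧸ r)[X]`, and `C r` is a nonzerodivisor on `R[X]` iff
`r` is one on `R`. For the last element, `C b - X` is a nonzerodivisor (up to sign it is monic)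
and `R[X] ⧸ (C b - X) ≅ R`, so on both sides what remains is that the final quotient is nonzero.
-/

open Polynomial RingTheory.Sequence
open scoped Pointwise

theorem Submodule.smul_top_eq_span_singleton {S : Type*} [CommRing S] (r : S) :
    r • (⊤ : Submodule S S) = Ideal.span {r} := by
  rw [← Submodule.ideal_span_singleton_smul, smul_eq_mul, Ideal.mul_top]

theorem RingTheory.Sequence.isRegular_nil_iff {R M : Type*} [CommRing R] [AddCommGroup M]
    [Module R M] : IsRegular M ([] : List R) ↔ Nontrivial M :=
  ⟨IsRegular.nontrivial, fun _ => .nil R M⟩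

theorem RingTheory.Sequence.isRegular_cons_iff_of_ker_eq_span {S T : Type*} [CommRing S]
    [CommRing T] {f : S →+* T} (hf : Function.Surjective f) {r : S}
    (hr : RingHom.ker f = Ideal.span {r}) (rs : List S) :
    IsRegular S (r :: rs) ↔ IsSMulRegular S r ∧ IsRegular T (rs.map f) := by
  rw [isRegular_cons_iff]
  refine and_congr_right fun _ => ?_
  have hspan : r • (⊤ : Submodule S S) = RingHom.ker f := by
    rw [Submodule.smul_top_eq_span_singleton, hr]
  let e : QuotSMulTop r S ≃+ T :=
    (Submodule.quotEquivOfEq _ _ hspan).toAddEquiv.trans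
      (RingHom.quotientKerEquivOfSurjective hf).toAddEquiv
  have he : ∀ x, e (Submodule.Quotient.mk x) = f x := fun _ => rfl
  refine e.isRegular_congr <| List.forall₂_map_right_iff.mpr <|
    List.forall₂_same.mpr fun c _ x => ?_
  obtain ⟨y, rfl⟩ := Submodule.Quotient.mk_surjective _ x
  rw [← Submodule.Quotient.mk_smul, he, he, smul_eq_mul, smul_eq_mul, map_mul]

theorem Polynomial.isSMulRegular_C_iff {R : Type*} [Semiring R] {r : R} :
    IsSMulRegular R[X] (C r) ↔ IsSMulRegular R r := by
  refine ⟨fun h x y hxy => C_injective (h ?_), fun h p q hpq => h.polynomial ?_⟩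
  · simpa only [smul_eq_mul, ← C_mul] using congrArg C hxy
  · simpa only [smul_eq_mul, C_mul'] using hpq

theorem Polynomial.isSMulRegular_C_sub_X {R : Type*} [CommRing R] (b : R) :
    IsSMulRegular R[X] (C b - X) := by
  intro p q hpq
  refine (monic_X_sub_C b).isRegular.left ?_
  simpa only [smul_eq_mul, ← neg_sub X, neg_mul, neg_inj] using hpq

theorem Polynomial.isRegular_map_C_append_C_sub_X_iff {R : Type*} [CommRing R] (rs : List R)
    (b : R) : IsRegular R[X] (rs.map C ++ [C b - X]) ↔ IsRegular R rs := by
  match rs with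
  | [] =>
    have hker : RingHom.ker (evalRingHom b) = Ideal.span {C b - X} := by
      rw [ker_evalRingHom, ← Ideal.span_singleton_neg, neg_sub]
    rw [List.map_nil, List.nil_append, isRegular_cons_iff_of_ker_eq_span
      (fun x => ⟨C x, eval_C⟩) hker, List.map_nil, isRegular_nil_iff]
    exact and_iff_right (isSMulRegular_C_sub_X b)
  | r :: rs =>
    let q := Ideal.Quotient.mk (Ideal.span {r})
    have hker : RingHom.ker (mapRingHom q) = Ideal.span {C r} := by
      rw [ker_mapRingHom, Ideal.mk_ker, Ideal.map_span, Set.image_singleton]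
    have hmap : (rs.map C ++ [C b - X]).map (mapRingHom q) =
        (rs.map q).map C ++ [C (q b) - X] := by
      simp
    rw [List.map_cons, List.cons_append,
      isRegular_cons_iff_of_ker_eq_span (map_surjective q Ideal.Quotient.mk_surjective) hker,
      hmap, isRegular_map_C_append_C_sub_X_iff (rs.map q) (q b),
      isRegular_cons_iff_of_ker_eq_span Ideal.Quotient.mk_surjective Ideal.mk_ker,
      isSMulRegular_C_iff]
termination_by rs.length

/-- For elements `a_1, …, a_{n−1}, a_n` of a commutative ring `R`, the
sequence `a_1, …, a_{n−1}, a_n − X` is regular on `R[X]` if and only if `a_1, …, a_{n−1}`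
is regular on `R`. -/
theorem regular_sequence_append_sub_X_iff {R : Type*} [CommRing R] {n : ℕ}
    (a : Fin n → R) (b : R) :
    RingTheory.Sequence.IsRegular (Polynomial R)
      ((List.ofFn fun i => Polynomial.C (a i)) ++ [Polynomial.C b - Polynomial.X]) ↔
    RingTheory.Sequence.IsRegular R (List.ofFn a) := by
  rw [← isRegular_map_C_append_C_sub_X_iff (List.ofFn a) b, List.map_ofFn]
  rfl
end

section
/- Let A be a commutative local ring and f, g_1, …, g_n ∈ A. Assume that f is integral over the ideal I = (g_1, …, g_n), and that ker φ = ker^{(1)}φ (i.e. the kernel of φ is generated by its homogeneous elements of degree 1; this is the condition that the ideal (f, g_1, …, g_n) is of linear type, phrased via φ). Then f belongs to the ideal (g_1, …, g_n). In particular, a divisor of commutative linear type is Euler homogeneous. -/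
/-!
Evaluate at the point `s = 1, ξ = 0`. A degree-one form `a s + ∑ b_j ξ_j` in `ker φ` has
`a f + ∑ b_j g_j = 0`, so `f` times its value `a` lies in `I`; this property passes to the ideal
`ker^{(1)} φ` these forms generate. Writing each `c_i ∈ I^{d-i}` as a form of degree `d - i` in
the `ξ_j`, the integral equation becomes a homogeneous `P = s^d + ∑ C_i(ξ) s^i ∈ ker φ` with value
`1` at that point. Linear type puts `P` in `ker^{(1)} φ`, whence `f = f · P(1, 0) ∈ I`.
-/

open MvPolynomial

/-- The `A`-algebra map `φ : A[s, ξ_1, …, ξ_n] → A[t]` with `φ(s) = f·t` and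
`φ(ξ_j) = g_j·t`; variable `0` is `s` and variable `j.succ` is `ξ_j`. Its image is the
Rees algebra of the ideal `(f, g_1, …, g_n)`. -/
noncomputable def reesPhi {A : Type*} [CommRing A] {n : ℕ} (f : A) (g : Fin n → A) :
    MvPolynomial (Fin (n + 1)) A →ₐ[A] Polynomial A :=
  aeval (Fin.cons (Polynomial.C f * Polynomial.X) fun j => Polynomial.C (g j) * Polynomial.X)

/-- `ker^{(1)} φ`: the ideal of `A[s, ξ_1, …, ξ_n]` generated by the homogeneous
elements of degree `1` lying in `ker φ`. -/
noncomputable def kerOne {A : Type*} [CommRing A] {n : ℕ} (f : A) (g : Fin n → A) :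
    Ideal (MvPolynomial (Fin (n + 1)) A) :=
  Ideal.span {p | p ∈ RingHom.ker (reesPhi f g) ∧ p.IsHomogeneous 1}

namespace MvPolynomial

variable {R S σ : Type*} [CommRing R] [CommRing S] [Algebra R S] {p : MvPolynomial σ R} {m : ℕ}

theorem IsHomogeneous.aeval_const_mul (hp : p.IsHomogeneous m) (r : S) (x : σ → S) :
    MvPolynomial.aeval (fun i => r * x i) p = r ^ m * MvPolynomial.aeval x p := by
  rw [aeval_def, aeval_def, eval₂_eq, eval₂_eq, Finset.mul_sum]
  refine Finset.sum_congr rfl fun d hd => ?_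
  have hdeg : d.degree = m := by
    by_contra h
    exact mem_support_iff.mp hd (hp.coeff_eq_zero h)
  rw [← hdeg, Finsupp.degree_apply, ← Finset.prod_pow_eq_pow_sum, mul_left_comm,
    ← Finset.prod_mul_distrib]
  simp only [mul_pow]

theorem IsHomogeneous.eval_sub_pow_mul_eval_mem (hp : p.IsHomogeneous m) {I : Ideal R}
    {x y : σ → R} {r : R} (hxy : ∀ i, x i - r * y i ∈ I) :
    eval x p - r ^ m * eval y p ∈ I := by
  have hx : (fun i => Ideal.Quotient.mkₐ R I (x i)) =
      fun i => Ideal.Quotient.mk I r * Ideal.Quotient.mkₐ R I (y i) :=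
    _root_.funext fun i => Ideal.Quotient.eq.mpr (hxy i)
  have := hp.aeval_const_mul (Ideal.Quotient.mk I r) (fun i => Ideal.Quotient.mkₐ R I (y i))
  rw [← hx, ← comp_aeval_apply, ← comp_aeval_apply] at this
  rwa [← Ideal.Quotient.eq, map_mul, map_pow]

end MvPolynomial

section Rees

variable {A : Type*} [CommRing A] {n : ℕ} (f : A) (g : Fin n → A)

theorem reesPhi_apply_of_isHomogeneous {p : MvPolynomial (Fin (n + 1)) A} {m : ℕ}
    (hp : p.IsHomogeneous m) :
    reesPhi f g p = Polynomial.C (eval (Fin.cons f g) p) * Polynomial.X ^ m := by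
  have hpt : (Fin.cons (Polynomial.C f * Polynomial.X) fun j => Polynomial.C (g j) * Polynomial.X :
      Fin (n + 1) → Polynomial A) =
      fun i => Polynomial.X * (algebraMap A (Polynomial A) ∘ Fin.cons f g) i := by
    funext i
    refine Fin.cases ?_ (fun j => ?_) i <;>
      simp only [Function.comp_apply, Fin.cons_zero, Fin.cons_succ, Polynomial.algebraMap_eq,
        mul_comm]
  rw [reesPhi, hpt, hp.aeval_const_mul, aeval_algebraMap_apply, Polynomial.algebraMap_eq,
    mul_comm]
  rfl

theorem reesPhi_eq_zero_iff_of_isHomogeneous {p : MvPolynomial (Fin (n + 1)) A} {m : ℕ}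
    (hp : p.IsHomogeneous m) : reesPhi f g p = 0 ↔ eval (Fin.cons f g) p = 0 := by
  rw [reesPhi_apply_of_isHomogeneous f g hp, Polynomial.C_mul_X_pow_eq_monomial,
    Polynomial.monomial_eq_zero_iff]

theorem mul_eval_mem_of_isHomogeneous_one {q : MvPolynomial (Fin (n + 1)) A}
    (hq : reesPhi f g q = 0) (hq1 : q.IsHomogeneous 1) :
    f * eval (Fin.cons 1 0) q ∈ Ideal.span (Set.range g) := by
  have hcons : ∀ i, (Fin.cons f g : Fin (n + 1) → A) i - f * (Fin.cons 1 0 : Fin (n + 1) → A) i ∈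
      Ideal.span (Set.range g) := fun i => by
    refine Fin.cases ?_ (fun j => ?_) i
    · simp
    · simpa using Ideal.subset_span (Set.mem_range_self j)
  have := hq1.eval_sub_pow_mul_eval_mem hcons
  rwa [(reesPhi_eq_zero_iff_of_isHomogeneous f g hq1).1 hq, zero_sub, neg_mem_iff, pow_one] at this

theorem mul_eval_mem_of_mem_kerOne {p : MvPolynomial (Fin (n + 1)) A} (hp : p ∈ kerOne f g) :
    f * eval (Fin.cons 1 0) p ∈ Ideal.span (Set.range g) := by
  suffices kerOne f g ≤ ((Ideal.span (Set.range g)).colon {f}).comap (eval (Fin.cons 1 0)) by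
    simpa [mul_comm] using this hp
  rw [kerOne, Ideal.span_le]
  rintro q ⟨hq, hq1⟩
  simpa [mul_comm] using mul_eval_mem_of_isHomogeneous_one f g hq hq1

theorem exists_isHomogeneous_eval_cons_eq_of_mem_pow {c : A} {k : ℕ}
    (hc : c ∈ Ideal.span (Set.range g) ^ k) (hk : k ≠ 0) :
    ∃ Q : MvPolynomial (Fin (n + 1)) A,
      Q.IsHomogeneous k ∧ eval (Fin.cons f g) Q = c ∧ eval (Fin.cons 1 0) Q = 0 := by
  obtain ⟨Q, hQ, rfl⟩ := (Ideal.mem_span_pow_iff_exists_isHomogeneous g c).1 hc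
  refine ⟨rename Fin.succ Q, hQ.rename_isHomogeneous, by simp [eval_rename], ?_⟩
  rw [eval_rename, show (Fin.cons 1 0 : Fin (n + 1) → A) ∘ Fin.succ = 0 from rfl, eval_zero,
    constantCoeff_eq]
  exact hQ.coeff_eq_zero (by simpa using hk.symm)

theorem exists_mem_ker_reesPhi_eval_eq_one {d : ℕ} {c : ℕ → A}
    (hc : ∀ i < d, c i ∈ Ideal.span (Set.range g) ^ (d - i))
    (heq : f ^ d + ∑ i ∈ Finset.range d, c i * f ^ i = 0) :
    ∃ P ∈ RingHom.ker (reesPhi f g), eval (Fin.cons 1 0) P = 1 := by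
  choose! Q hQ hQfg hQ10 using fun i (hi : i < d) =>
    exists_isHomogeneous_eval_cons_eq_of_mem_pow f g (hc i hi) (Nat.sub_ne_zero_of_lt hi)
  have hP : (X 0 ^ d + ∑ i ∈ Finset.range d, Q i * X 0 ^ i).IsHomogeneous d := by
    refine (isHomogeneous_X_pow 0 d).add (IsHomogeneous.sum _ _ _ fun i hi => ?_)
    have hi := Finset.mem_range.1 hi
    simpa [Nat.sub_add_cancel hi.le] using (hQ i hi).mul (isHomogeneous_X_pow 0 i)
  refine ⟨_, (reesPhi_eq_zero_iff_of_isHomogeneous f g hP).2 ?_, ?_⟩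
  · simp only [map_add, map_sum, map_mul, map_pow, eval_X, Fin.cons_zero, ← heq]
    exact congrArg _ (Finset.sum_congr rfl fun i hi => by rw [hQfg i (Finset.mem_range.1 hi)])
  · simp only [map_add, map_sum, map_mul, map_pow, eval_X, Fin.cons_zero, one_pow, mul_one]
    rw [Finset.sum_eq_zero fun i hi => hQ10 i (Finset.mem_range.1 hi), add_zero]

end Rees

theorem mem_of_linear_type_general {A : Type*} [CommRing A] {n : ℕ}
    (f : A) (g : Fin n → A)
    (hint : ∃ d : ℕ, 0 < d ∧ ∃ c : ℕ → A,
      (∀ i < d, c i ∈ (Ideal.span (Set.range g)) ^ (d - i)) ∧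
      f ^ d + ∑ i ∈ Finset.range d, c i * f ^ i = 0)
    (hlin : RingHom.ker (reesPhi f g) = kerOne f g) :
    f ∈ Ideal.span (Set.range g) := by
  obtain ⟨d, -, c, hc, heq⟩ := hint
  obtain ⟨P, hPker, hP⟩ := exists_mem_ker_reesPhi_eval_eq_one f g hc heq
  have := mul_eval_mem_of_mem_kerOne f g (hlin ▸ hPker)
  rwa [hP, mul_one] at this

/-- Let `A` be a commutative local ring and `f, g_1, …, g_n ∈ A` with `f`
integral over the ideal `I = (g_1, …, g_n)`. If `ker φ = ker^{(1)} φ` (the linear type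
condition), then `f ∈ (g_1, …, g_n)`. -/
theorem mem_of_linear_type {A : Type*} [CommRing A] [IsLocalRing A] {n : ℕ}
    (f : A) (g : Fin n → A)
    (hint : ∃ d : ℕ, 0 < d ∧ ∃ c : ℕ → A,
      (∀ i < d, c i ∈ (Ideal.span (Set.range g)) ^ (d - i)) ∧
      f ^ d + ∑ i ∈ Finset.range d, c i * f ^ i = 0)
    (hlin : RingHom.ker (reesPhi f g) = kerOne f g) :
    f ∈ Ideal.span (Set.range g) :=
  mem_of_linear_type_general f g hint hlin
end

section
/- Let A = ℂ[x_1, x_2, x_3] and f = x_1·x_2·(x_1 + x_2)·(x_1 + x_2·x_3). Then the A-module of logarithmic derivations with respect to f is a free A-module of rank 3, and it admits a basis δ_1, δ_2, δ_3 such that δ_1(f) = δ_2(f) = 0 and δ_3(f) = 4·f. -/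
/-!
Saito's criterion. If `f` is reduced, in the sense that `f ∣ p * ∂ᵢf` for all `i` forces
`f ∣ p`, then `f` divides the determinant of the coefficient matrix `M` of any `n` logarithmic
derivations: `M * ∇f ≡ 0 mod f`, so `det M • ∇f = adj M * (M * ∇f) ≡ 0 mod f`. Hence, if `det M`
is a unit multiple of `f`, Cramer's rule expresses every logarithmic derivation as a combination
of the rows of `M` with polynomial coefficients, and the rows are independent since `det M ≠ 0`.

For the four lines, three explicit derivations have `det M = -16 f`, and `f` is reduced because
each of its four factors is prime, occurs once, and has a partial derivative equal to `1`.
-/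

open MvPolynomial

/-- Evaluation of derivations at a fixed element `h`, as an `A`-linear map. -/
noncomputable def derivEval (R : Type*) {A : Type*} [CommRing R] [CommRing A] [Algebra R A]
    (h : A) : Derivation R A A →ₗ[A] A where
  toFun δ := δ h
  map_add' _ _ := rfl
  map_smul' _ _ := rfl

/-- The `A`-submodule of `R`-derivations `δ` of `A` that are logarithmic with respect
to `h`, i.e. such that `δ h ∈ (h)`. -/
noncomputable def logDer (R : Type*) {A : Type*} [CommRing R] [CommRing A] [Algebra R A]
    (h : A) : Submodule A (Derivation R A A) :=
  Submodule.comap (derivEval R h) (Ideal.span {h})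

/-- The equation of the "four lines" divisor in `ℂ^3`:
`f = x_1·x_2·(x_1 + x_2)·(x_1 + x_2·x_3)`. -/
noncomputable def fourLines : MvPolynomial (Fin 3) ℂ :=
  X 0 * X 1 * (X 0 + X 1) * (X 0 + X 1 * X 2)

theorem Derivation.sum_apply {ι R A : Type*} [CommRing R] [CommRing A] [Algebra R A]
    (s : Finset ι) (D : ι → Derivation R A A) (a : A) : (∑ i ∈ s, D i) a = ∑ i ∈ s, D i a :=
  map_sum (derivEval R a) D s

theorem mem_logDer_iff {R A : Type*} [CommRing R] [CommRing A] [Algebra R A] {h : A}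
    {δ : Derivation R A A} : δ ∈ logDer R h ↔ h ∣ δ h := by
  rw [logDer, Submodule.mem_comap, Ideal.mem_span_singleton]
  rfl

theorem Prime.dvd_of_dvd_mul_derivation {R A : Type*} [CommRing R] [CommRing A] [Algebra R A]
    {q g p : A} (D : Derivation R A A) (hq : Prime q) (hg : ¬ q ∣ g) (hD : ¬ q ∣ D q)
    (h : q * g ∣ p * D (q * g)) : q ∣ p := by
  have hq' : q ∣ p * (q * D g) + p * (g * D q) := by
    simpa [Derivation.leibniz, mul_add] using dvd_trans (dvd_mul_right q g) h
  have hpg : q ∣ p * (g * D q) := (dvd_add_right (Dvd.intro (p * D g) (by ring))).mp hq'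
  rcases hq.dvd_or_dvd hpg with hp | hgD
  · exact hp
  · exact absurd ((hq.dvd_or_dvd hgD).resolve_left hg) hD

theorem Prime.mul_dvd_of_dvd_of_not_dvd {A : Type*} [CommMonoidWithZero A] {q a p : A}
    (hq : Prime q) (ha : a ∣ p) (hqp : q ∣ p) (hqa : ¬ q ∣ a) : a * q ∣ p := by
  obtain ⟨t, rfl⟩ := ha
  exact mul_dvd_mul_left a ((hq.dvd_or_dvd hqp).resolve_left hqa)

namespace Matrix

variable {n A : Type*} [Fintype n] [DecidableEq n] [CommRing A]

theorem dvd_det_mul_of_dvd_mulVec {f : A} (N : Matrix n n A) (v : n → A)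
    (h : ∀ k, f ∣ (N *ᵥ v) k) (i : n) : f ∣ N.det * v i := by
  choose w hw using h
  have : N.det • v = f • (N.adjugate *ᵥ w) :=
    calc N.det • v = (N.adjugate * N) *ᵥ v := by rw [adjugate_mul, smul_mulVec, one_mulVec]
      _ = N.adjugate *ᵥ (f • w) := by rw [← mulVec_mulVec]; congr 1; exact funext hw
      _ = f • (N.adjugate *ᵥ w) := mulVec_smul _ _ _
  exact ⟨_, congrFun this i⟩

theorem exists_mulVec_eq_of_dvd_cramer [IsDomain A] {f : A} (N : Matrix n n A) (v : n → A)
    (hf : f ≠ 0) (hdet : Associated f N.det) (h : ∀ j, f ∣ N.cramer v j) :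
    ∃ c, N *ᵥ c = v := by
  choose w hw using h
  obtain ⟨u, hu⟩ := hdet
  refine ⟨(↑u⁻¹ : A) • w, ?_⟩
  have : f • (N *ᵥ w) = f • ((u : A) • v) := by
    rw [← mulVec_smul, smul_smul, hu, ← mulVec_cramer]
    congr 1
    exact (funext hw).symm
  rw [mulVec_smul, smul_right_injective _ hf this, smul_smul, Units.inv_mul, one_smul]

end Matrix

namespace MvPolynomial

open scoped Matrix

variable {σ R : Type*} [CommRing R]

theorem not_dvd_of_eval_eq_zero {q p : MvPolynomial σ R} (x : σ → R) (hq : eval x q = 0)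
    (hp : eval x p ≠ 0) : ¬ q ∣ p :=
  fun h => hp (zero_dvd_iff.mp (hq ▸ map_dvd (eval x) h))

theorem prime_X_add [IsDomain R] {i : σ} {g : MvPolynomial σ R} (hi : i ∉ g.vars) :
    Prime (X i + g) := by
  classical
  have fix : ∀ c, aeval (Function.update X i c) g = g := fun c =>
    hom_congr_vars (f₂ := RingHom.id _) (by ext; simp) (fun j hj _ => by
      simp [Function.update_of_ne (ne_of_mem_of_not_mem hj hi)]) rfl
  let e : MvPolynomial σ R ≃ₐ[R] MvPolynomial σ R :=
    AlgEquiv.ofAlgHom (aeval (Function.update X i (X i + g)))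
      (aeval (Function.update X i (X i - g)))
      (algHom_ext fun j => by
        rcases eq_or_ne j i with rfl | hj
        · simp only [AlgHom.comp_apply, aeval_X, Function.update_self, map_sub, fix,
            AlgHom.id_apply, add_sub_cancel_right]
        · simp [hj])
      (algHom_ext fun j => by
        rcases eq_or_ne j i with rfl | hj
        · simp only [AlgHom.comp_apply, aeval_X, Function.update_self, map_add, fix,
            AlgHom.id_apply, sub_add_cancel]
        · simp [hj])
  have he : e (X i) = X i + g := by simp [e]
  exact he ▸ (MulEquiv.prime_iff e.toMulEquiv).mpr X_prime

theorem derivation_apply_eq_sum_pderiv [Fintype σ]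
    (D : Derivation R (MvPolynomial σ R) (MvPolynomial σ R)) (p : MvPolynomial σ R) :
    D p = ∑ i, D (X i) * pderiv i p := by
  classical
  have hD : D = ∑ i, D (X i) • pderiv i :=
    derivation_ext fun j => by simp [Derivation.sum_apply, pderiv_X, Pi.single_apply]
  simpa [Derivation.sum_apply] using congrArg (· p) hD

noncomputable def derivationMatrix {ι : Type*}
    (δ : ι → Derivation R (MvPolynomial σ R) (MvPolynomial σ R)) :
    Matrix ι σ (MvPolynomial σ R) :=
  Matrix.of fun j i => δ j (X i)

theorem derivationMatrix_mulVec_pderiv [Fintype σ] {ι : Type*}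
    (δ : ι → Derivation R (MvPolynomial σ R) (MvPolynomial σ R)) (f : MvPolynomial σ R) :
    derivationMatrix δ *ᵥ (fun i => pderiv i f) = fun k => δ k f := by
  ext k
  rw [derivation_apply_eq_sum_pderiv]
  rfl

variable [Fintype σ] [DecidableEq σ] {f : MvPolynomial σ R}

theorem dvd_det_derivationMatrix (hf : ∀ p, (∀ i, f ∣ p * pderiv i f) → f ∣ p)
    {δ : σ → Derivation R (MvPolynomial σ R) (MvPolynomial σ R)} (hδ : ∀ j, δ j ∈ logDer R f) :
    f ∣ (derivationMatrix δ).det :=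
  hf _ fun i => (derivationMatrix δ).dvd_det_mul_of_dvd_mulVec (fun i => pderiv i f)
    (fun k => by rw [derivationMatrix_mulVec_pderiv]; exact mem_logDer_iff.mp (hδ k)) i

theorem exists_basis_logDer_of_associated_det [IsDomain R]
    (hf : ∀ p, (∀ i, f ∣ p * pderiv i f) → f ∣ p)
    (δ : σ → Derivation R (MvPolynomial σ R) (MvPolynomial σ R)) (hδ : ∀ j, δ j ∈ logDer R f)
    (hdet : Associated f (derivationMatrix δ).det) :
    ∃ b : Module.Basis σ (MvPolynomial σ R) (logDer R f),
      ∀ j, (b j : Derivation R (MvPolynomial σ R) (MvPolynomial σ R)) = δ j := by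
  have hf0 : f ≠ 0 := by
    rintro rfl
    exact one_ne_zero (zero_dvd_iff.mp (hf 1 fun i => by simp))
  let coeffs : Derivation R (MvPolynomial σ R) (MvPolynomial σ R) →ₗ[MvPolynomial σ R]
      (σ → MvPolynomial σ R) :=
    { toFun := fun D i => D (X i), map_add' := fun _ _ => rfl, map_smul' := fun _ _ => rfl }
  have hli : LinearIndependent (MvPolynomial σ R) fun j => (⟨δ j, hδ j⟩ : logDer R f) :=
    LinearIndependent.of_comp (coeffs ∘ₗ (logDer R f).subtype)
      (Matrix.linearIndependent_rows_of_det_ne_zero (hdet.ne_zero_iff.mp hf0))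
  have hsp : ⊤ ≤ Submodule.span (MvPolynomial σ R)
      (Set.range fun j => (⟨δ j, hδ j⟩ : logDer R f)) := by
    rintro ⟨D, hD⟩ -
    have hcramer : ∀ j, f ∣ (derivationMatrix δ)ᵀ.cramer (coeffs D) j := fun j => by
      have hrow : (derivationMatrix δ).updateRow j (coeffs D) =
          derivationMatrix (Function.update δ j D) := by
        ext k i
        rcases eq_or_ne k j with rfl | hk <;> simp [derivationMatrix, coeffs, *]
      rw [Matrix.cramer_transpose_apply, hrow]
      refine dvd_det_derivationMatrix hf fun k => ?_
      rcases eq_or_ne k j with rfl | hk <;> simp [*]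
    obtain ⟨c, hc⟩ := (derivationMatrix δ)ᵀ.exists_mulVec_eq_of_dvd_cramer (coeffs D) hf0
      (by rwa [Matrix.det_transpose]) hcramer
    rw [Submodule.mem_span_range_iff_exists_fun]
    refine ⟨c, Subtype.ext (derivation_ext fun i => ?_)⟩
    simpa [Derivation.sum_apply, Matrix.mulVec, dotProduct, derivationMatrix, coeffs, mul_comm]
      using congrFun hc i
  exact ⟨Module.Basis.mk hli hsp, fun j => by simp⟩

end MvPolynomial

theorem fourLines_dvd_of_forall_dvd_mul_pderiv {p : MvPolynomial (Fin 3) ℂ}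
    (h : ∀ i, fourLines ∣ p * pderiv i fourLines) : fourLines ∣ p := by
  have factor_dvd : ∀ {q g : MvPolynomial (Fin 3) ℂ} (i : Fin 3) (x : Fin 3 → ℂ), Prime q →
      pderiv i q = 1 → fourLines = q * g → eval x q = 0 → eval x g ≠ 0 → q ∣ p :=
    fun i x hq hi hqg hxq hxg => hq.dvd_of_dvd_mul_derivation (pderiv i)
      (not_dvd_of_eval_eq_zero x hxq hxg) (hi ▸ hq.not_dvd_one) (hqg ▸ h i)
  have hX01 : Prime (X 0 + X 1 : MvPolynomial (Fin 3) ℂ) := prime_X_add (by simp)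
  have hX012 : Prime (X 0 + X 1 * X 2 : MvPolynomial (Fin 3) ℂ) :=
    prime_X_add fun h => by simpa using vars_mul _ _ h
  have h0 : X 0 ∣ p := factor_dvd (g := X 1 * (X 0 + X 1) * (X 0 + X 1 * X 2)) 0 ![0, 1, 1]
    X_prime (by simp [pderiv_X]) (by rw [fourLines]; ring) (by simp) (by simp [Matrix.cons_val_two])
  have h1 : X 1 ∣ p := factor_dvd (g := X 0 * (X 0 + X 1) * (X 0 + X 1 * X 2)) 1 ![1, 0, 0]
    X_prime (by simp [pderiv_X]) (by rw [fourLines]; ring) (by simp) (by simp [Matrix.cons_val_two])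
  have h01 : X 0 + X 1 ∣ p := factor_dvd (g := X 0 * X 1 * (X 0 + X 1 * X 2)) 0 ![1, -1, 0]
    hX01 (by simp [pderiv_X]) (by rw [fourLines]; ring) (by simp) (by simp [Matrix.cons_val_two])
  have h012 : X 0 + X 1 * X 2 ∣ p := factor_dvd (g := X 0 * X 1 * (X 0 + X 1)) 0 ![-2, 1, 2]
    hX012 (by simp [pderiv_X]) (by rw [fourLines]; ring) (by simp) (by norm_num)
  refine hX012.mul_dvd_of_dvd_of_not_dvd
    (hX01.mul_dvd_of_dvd_of_not_dvd (X_prime.mul_dvd_of_dvd_of_not_dvd h0 h1 ?_) h01 ?_) h012 ?_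
  · exact not_dvd_of_eval_eq_zero ![1, 0, 0] (by simp) (by simp)
  · exact not_dvd_of_eval_eq_zero ![1, -1, 0] (by simp) (by simp)
  · exact not_dvd_of_eval_eq_zero ![-2, 1, 2] (by simp) (by norm_num)

-- The third derivation is the Euler field of the grading `deg x₁ = deg x₂ = 1`, `deg x₃ = 0`,
-- for which `fourLines` is homogeneous of degree `4`.
noncomputable def fourLinesDer :
    Fin 3 → Derivation ℂ (MvPolynomial (Fin 3) ℂ) (MvPolynomial (Fin 3) ℂ) :=
  ![mkDerivation ℂ ![X 0 * X 1, X 1 ^ 2, -4 * (X 0 + X 1 * X 2)],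
    mkDerivation ℂ ![X 0 ^ 2 + 2 * X 0 * X 1, -2 * X 1 ^ 2 - 3 * X 0 * X 1, 4 * X 2 * (X 0 + X 1)],
    mkDerivation ℂ ![X 0, X 1, 0]]

theorem fourLinesDer_apply_fourLines :
    fourLinesDer 0 fourLines = 0 ∧ fourLinesDer 1 fourLines = 0 ∧
      fourLinesDer 2 fourLines = 4 * fourLines := by
  refine ⟨?_, ?_, ?_⟩ <;>
  · simp [fourLinesDer, fourLines, Derivation.leibniz]
    ring

theorem det_derivationMatrix_fourLinesDer :
    (derivationMatrix fourLinesDer).det = -16 * fourLines := by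
  simp [Matrix.det_fin_three, derivationMatrix, fourLinesDer, fourLines]
  ring

/-- For `f = x_1·x_2·(x_1 + x_2)·(x_1 + x_2·x_3)` in `A = ℂ[x_1,x_2,x_3]`,
the `A`-module of logarithmic derivations with respect to `f` is free of rank `3`, with a
basis `δ_1, δ_2, δ_3` satisfying `δ_1 f = δ_2 f = 0` and `δ_3 f = 4·f`. -/
theorem fourLines_free_basis :
    ∃ b : Module.Basis (Fin 3) (MvPolynomial (Fin 3) ℂ) (logDer ℂ fourLines),
      (b 0).1 fourLines = 0 ∧ (b 1).1 fourLines = 0 ∧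
        (b 2).1 fourLines = 4 * fourLines := by
  obtain ⟨h0, h1, h2⟩ := fourLinesDer_apply_fourLines
  have hmem : ∀ j, fourLinesDer j ∈ logDer ℂ fourLines := fun j => by
    rw [mem_logDer_iff]
    fin_cases j <;> simp [h0, h1, h2]
  have hunit : IsUnit (-16 : MvPolynomial (Fin 3) ℂ) := by
    have := (isUnit_iff_ne_zero.mpr (by norm_num : (-16 : ℂ) ≠ 0)).map (C (σ := Fin 3))
    rwa [map_neg, map_ofNat] at this
  have hdet : Associated fourLines (derivationMatrix fourLinesDer).det := by
    rw [det_derivationMatrix_fourLinesDer]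
    exact (associated_unit_mul_left _ _ hunit).symm
  obtain ⟨b, hb⟩ := exists_basis_logDer_of_associated_det
    (fun _ => fourLines_dvd_of_forall_dvd_mul_pderiv) fourLinesDer hmem hdet
  exact ⟨b, by simpa only [hb] using fourLinesDer_apply_fourLines⟩
end
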